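/- Let v : ℝ⁴ → ℝ be smooth. Define F₁ = ∂₁∂₃v − ∂₂²v + 3(∂₁²v)² + ∂₁⁴v and F₂ = ∂₁²∂₄v + 4∂₁⁴∂₂v − (4/3)∂₂³v + 8(∂₁³v)(∂₁∂₂v) + 16(∂₁²v)(∂₁²∂₂v). Then there exist smooth functions P₁, P₂, P₃, P₄ : ℝ⁴ → ℝ, each given by an explicit differential polynomial in v (with no explicit x-dependence), such that F₂·F₁ = ∂₁P₁ + ∂₂P₂ + ∂₃P₃ + ∂₄P₄ pointwise; in particular, if v satisfies either F₁ = 0 (the first KP equation in integrated form) or F₂ = 0 (the second KP equation in integrated form) everywhere, then the divergence ∂₁P₁ + ∂₂P₂ + ∂₃P₃ + ∂₄P₄ vanishes everywhere. -/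

import Mathlib

/-- Partial derivative in coordinate direction `i` of a function on `ℝⁿ = (Fin n → ℝ)`. -/
noncomputable def pd (n : ℕ) (i : Fin n) (f : (Fin n → ℝ) → ℝ) : (Fin n → ℝ) → ℝ :=
  fun x => fderiv ℝ f x (Pi.single i 1)

/-- Iterated partial derivative `∂^β` for a multi-index `β : Fin n → ℕ`. -/
noncomputable def pdM (n : ℕ) (β : Fin n → ℕ) (f : (Fin n → ℝ) → ℝ) : (Fin n → ℝ) → ℝ :=
  (List.finRange n).foldr (fun i g => (pd n i)^[β i] g) f

/-- The differential polynomial in `u` determined by a polynomial `p` in `k` formal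
variables and multi-indices `β m` specifying which derivative of `u` each variable
stands for: `DP p β u = p(∂^{β 0}u, …, ∂^{β (k-1)}u)` (constant coefficients, no
explicit `x`-dependence). -/
noncomputable def DP {n k : ℕ} (p : MvPolynomial (Fin k) ℝ) (β : Fin k → Fin n → ℕ)
    (u : (Fin n → ℝ) → ℝ) : (Fin n → ℝ) → ℝ :=
  fun x => MvPolynomial.eval (fun m => pdM n (β m) u x) p

/-- The first KP equation in integrated form,
`F₁ = ∂₁∂₃v − ∂₂²v + 3(∂₁²v)² + ∂₁⁴v` (coordinates `x₁,x₂,x₃,x₄` are indices `0,1,2,3`). -/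
noncomputable def F1 (v : (Fin 4 → ℝ) → ℝ) : (Fin 4 → ℝ) → ℝ := fun x =>
  pd 4 0 (pd 4 2 v) x - pd 4 1 (pd 4 1 v) x
    + 3 * (pd 4 0 (pd 4 0 v) x) ^ 2 + pd 4 0 (pd 4 0 (pd 4 0 (pd 4 0 v))) x

/-- The second KP equation in integrated form,
`F₂ = ∂₁²∂₄v + 4∂₁⁴∂₂v − (4/3)∂₂³v + 8(∂₁³v)(∂₁∂₂v) + 16(∂₁²v)(∂₁²∂₂v)`. -/
noncomputable def F2 (v : (Fin 4 → ℝ) → ℝ) : (Fin 4 → ℝ) → ℝ := fun x =>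
  pd 4 0 (pd 4 0 (pd 4 3 v)) x
    + 4 * pd 4 0 (pd 4 0 (pd 4 0 (pd 4 0 (pd 4 1 v)))) x
    - (4 / 3) * pd 4 1 (pd 4 1 (pd 4 1 v)) x
    + 8 * pd 4 0 (pd 4 0 (pd 4 0 v)) x * pd 4 0 (pd 4 1 v) x
    + 16 * pd 4 0 (pd 4 0 v) x * pd 4 0 (pd 4 0 (pd 4 1 v)) x

theorem pd_contDiff {f : (Fin 4 → ℝ) → ℝ} (hf : ContDiff ℝ (⊤ : ℕ∞) f) (i : Fin 4) :
    ContDiff ℝ (⊤ : ℕ∞) (pd 4 i f) :=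
  (hf.fderiv_right (by simp)).clm_apply contDiff_const

theorem pd_apply_eq {f : (Fin 4 → ℝ) → ℝ} (hf : ContDiff ℝ (⊤ : ℕ∞) f) (i j : Fin 4) (x) :
    pd 4 i (pd 4 j f) x = fderiv ℝ (fderiv ℝ f) x (Pi.single i 1) (Pi.single j 1) := by
  have hf' : ContDiff ℝ (⊤ : ℕ∞) (fderiv ℝ f) := hf.fderiv_right (by simp)
  have h2 : DifferentiableAt ℝ (fderiv ℝ f) x := (hf'.differentiable (by simp)) x
  show fderiv ℝ (fun y => fderiv ℝ f y (Pi.single j 1)) x (Pi.single i 1) = _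
  rw [fderiv_clm_apply h2 (differentiableAt_const _)]
  simp

theorem pd_comm {f : (Fin 4 → ℝ) → ℝ} (hf : ContDiff ℝ (⊤ : ℕ∞) f) (i j : Fin 4) :
    pd 4 i (pd 4 j f) = pd 4 j (pd 4 i f) := by
  funext x
  have hd : Differentiable ℝ f := hf.differentiable (by simp)
  have hf' : ContDiff ℝ (⊤ : ℕ∞) (fderiv ℝ f) := hf.fderiv_right (by simp)
  have h2 : DifferentiableAt ℝ (fderiv ℝ f) x := (hf'.differentiable (by simp)) x
  rw [pd_apply_eq hf, pd_apply_eq hf]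
  exact second_derivative_symmetric (fun y => (hd y).hasFDerivAt) h2.hasFDerivAt _ _

theorem pd_iter_contDiff {f : (Fin 4 → ℝ) → ℝ} (hf : ContDiff ℝ (⊤ : ℕ∞) f) (i : Fin 4) (m : ℕ) :
    ContDiff ℝ (⊤ : ℕ∞) ((pd 4 i)^[m] f) := by
  induction m with
  | zero => exact hf
  | succ m ih => rw [Function.iterate_succ_apply']; exact pd_contDiff ih i

theorem pd_iter_comm {f : (Fin 4 → ℝ) → ℝ} (hf : ContDiff ℝ (⊤ : ℕ∞) f) (i j : Fin 4) (m : ℕ) :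
    pd 4 i ((pd 4 j)^[m] f) = (pd 4 j)^[m] (pd 4 i f) := by
  induction m with
  | zero => rfl
  | succ m ih =>
      rw [Function.iterate_succ_apply', Function.iterate_succ_apply',
        pd_comm (pd_iter_contDiff hf j m), ih]

/-- canonical jet -/
noncomputable def dv (v : (Fin 4 → ℝ) → ℝ) (a b c d : ℕ) : (Fin 4 → ℝ) → ℝ :=
  (pd 4 0)^[a] ((pd 4 1)^[b] ((pd 4 2)^[c] ((pd 4 3)^[d] v)))

theorem dv_contDiff {v} (hv : ContDiff ℝ (⊤ : ℕ∞) v) (a b c d : ℕ) : ContDiff ℝ (⊤ : ℕ∞) (dv v a b c d) :=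
  pd_iter_contDiff (pd_iter_contDiff (pd_iter_contDiff (pd_iter_contDiff hv 3 d) 2 c) 1 b) 0 a

theorem pd0_dv {v} (a b c d : ℕ) : pd 4 0 (dv v a b c d) = dv v (a+1) b c d :=
  (Function.iterate_succ_apply' _ _ _).symm

theorem pd1_dv {v} (hv : ContDiff ℝ (⊤ : ℕ∞) v) (a b c d : ℕ) :
    pd 4 1 (dv v a b c d) = dv v a (b+1) c d := by
  unfold dv
  rw [pd_iter_comm (pd_iter_contDiff (pd_iter_contDiff (pd_iter_contDiff hv 3 d) 2 c) 1 b) 1 0 a,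
    Function.iterate_succ_apply']

theorem pd2_dv {v} (hv : ContDiff ℝ (⊤ : ℕ∞) v) (a b c d : ℕ) :
    pd 4 2 (dv v a b c d) = dv v a b (c+1) d := by
  unfold dv
  have h3 := pd_iter_contDiff hv 3 d
  have h2 := pd_iter_contDiff h3 2 c
  have h1 := pd_iter_contDiff h2 1 b
  rw [pd_iter_comm h1 2 0 a, pd_iter_comm h2 2 1 b, Function.iterate_succ_apply']

theorem pd3_dv {v} (hv : ContDiff ℝ (⊤ : ℕ∞) v) (a b c d : ℕ) :
    pd 4 3 (dv v a b c d) = dv v a b c (d+1) := by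
  unfold dv
  have h3 := pd_iter_contDiff hv 3 d
  have h2 := pd_iter_contDiff h3 2 c
  have h1 := pd_iter_contDiff h2 1 b
  rw [pd_iter_comm h1 3 0 a, pd_iter_comm h2 3 1 b, pd_iter_comm h3 3 2 c,
    Function.iterate_succ_apply']

-- derivative structural lemmas
theorem pd_fun_add {f g : (Fin 4 → ℝ) → ℝ} (i : Fin 4)
    (hf : Differentiable ℝ f) (hg : Differentiable ℝ g) :
    pd 4 i (fun x => f x + g x) = fun x => pd 4 i f x + pd 4 i g x := by
  funext x
  show fderiv ℝ (fun y => f y + g y) x _ = _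
  rw [fderiv_fun_add (hf x) (hg x)]; rfl

theorem pd_fun_mul {f g : (Fin 4 → ℝ) → ℝ} (i : Fin 4)
    (hf : Differentiable ℝ f) (hg : Differentiable ℝ g) :
    pd 4 i (fun x => f x * g x) = fun x => pd 4 i f x * g x + f x * pd 4 i g x := by
  funext x
  show fderiv ℝ (fun y => f y * g y) x _ = _
  rw [fderiv_fun_mul (hf x) (hg x)]
  show (f x • fderiv ℝ g x + g x • fderiv ℝ f x) (Pi.single i 1) = _
  simp [pd]; ring

theorem pd_fun_const_mul {f : (Fin 4 → ℝ) → ℝ} (i : Fin 4) (c : ℝ)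
    (hf : Differentiable ℝ f) :
    pd 4 i (fun x => c * f x) = fun x => c * pd 4 i f x := by
  funext x
  show fderiv ℝ (fun y => c * f y) x _ = _
  rw [fderiv_const_mul (hf x)]; rfl

theorem pd_fun_const (i : Fin 4) (c : ℝ) : pd 4 i (fun _ => c) = fun _ => 0 := by
  funext x; show fderiv ℝ (fun _ => c) x _ = _; rw [fderiv_fun_const]; rfl

theorem pdM4_eq (v : (Fin 4 → ℝ) → ℝ) (a b c d : ℕ) : pdM 4 ![a,b,c,d] v = dv v a b c d := by
  show List.foldr _ _ (List.finRange 4) = _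
  rw [show List.finRange 4 = [0,1,2,3] from rfl]
  simp only [List.foldr_cons, List.foldr_nil]
  rfl

def bKP : Fin 31 → Fin 4 → ℕ := ![![0,0,0,0], ![0,1,0,0], ![0,2,0,0], ![0,2,0,1], ![0,3,0,0], ![0,3,1,0], ![1,0,0,0], ![1,0,1,0], ![1,0,1,1], ![1,1,0,0], ![1,1,1,0], ![1,2,0,0], ![1,2,0,1], ![1,2,1,0], ![1,3,0,0], ![2,0,0,0], ![2,0,0,1], ![2,0,1,0], ![2,1,0,0], ![2,1,0,1], ![2,1,1,0], ![2,2,0,0], ![2,3,0,0], ![3,0,0,0], ![3,0,0,1], ![3,1,0,0], ![3,1,1,0], ![3,3,0,0], ![4,0,0,0], ![4,1,0,0], ![4,2,0,0]]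
set_option maxHeartbeats 1000000 in
noncomputable def pKP0 : MvPolynomial (Fin 31) ℝ :=
  MvPolynomial.C (2/3 : ℝ) * (MvPolynomial.X 0 * MvPolynomial.X 5) + MvPolynomial.C (-8/3 : ℝ) * (MvPolynomial.X 0 * MvPolynomial.X 9 * MvPolynomial.X 21) + MvPolynomial.C (-16/3 : ℝ) * (MvPolynomial.X 0 * MvPolynomial.X 11 * MvPolynomial.X 18) + MvPolynomial.C (-1/2 : ℝ) * (MvPolynomial.X 0 * MvPolynomial.X 12) + MvPolynomial.C (-8/3 : ℝ) * (MvPolynomial.X 0 * MvPolynomial.X 14 * MvPolynomial.X 15) + MvPolynomial.C (-4/3 : ℝ) * (MvPolynomial.X 0 * MvPolynomial.X 27) + MvPolynomial.C (8/3 : ℝ) * (MvPolynomial.X 2 * MvPolynomial.X 6 * MvPolynomial.X 18) + MvPolynomial.C (-8/3 : ℝ) * (MvPolynomial.X 2 * MvPolynomial.X 9 * MvPolynomial.X 15) + MvPolynomial.C (1/2 : ℝ) * (MvPolynomial.X 3 * MvPolynomial.X 6) + MvPolynomial.C (8/3 : ℝ) * (MvPolynomial.X 4 * MvPolynomial.X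 6 * MvPolynomial.X 15) + MvPolynomial.C (4/3 : ℝ) * (MvPolynomial.X 4 * MvPolynomial.X 23) + MvPolynomial.C (-8/3 : ℝ) * (MvPolynomial.X 6 * MvPolynomial.X 7 * MvPolynomial.X 18) + MvPolynomial.C (-1/2 : ℝ) * (MvPolynomial.X 6 * MvPolynomial.X 8) + MvPolynomial.C (8/3 : ℝ) * (MvPolynomial.X 6 * MvPolynomial.X 9 * MvPolynomial.X 11) + MvPolynomial.C (-8/3 : ℝ) * (MvPolynomial.X 6 * MvPolynomial.X 9 * MvPolynomial.X 17) + MvPolynomial.C (-16/3 : ℝ) * (MvPolynomial.X 6 * MvPolynomial.X 10 * MvPolynomial.X 15) + MvPolynomial.C (-6 : ℝ) * (MvPolynomial.X 6 * MvPolynomial.X 15 * MvPolynomial.X 15 * MvPolynomial.X 18) + MvPolynomial.C (4/3 : ℝ) * (MvPolynomial.X 6 * MvPolynomial.X 22) + MvPolynomial.C (-8/3 : ℝ) * (MvPolynomial.X 6 * MvPolynomial.X 23 * MvPolynomial.X 25) + MvPolynomial.C (-2 : ℝ) * (MvPolynomial.X 6 * MvPolynomial.X 26) + MvPolynomial.C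 (8/3 : ℝ) * (MvPolynomial.X 7 * MvPolynomial.X 9 * MvPolynomial.X 15) + MvPolynomial.C (6 : ℝ) * (MvPolynomial.X 9 * MvPolynomial.X 15 * MvPolynomial.X 15 * MvPolynomial.X 15) + MvPolynomial.C (8/3 : ℝ) * (MvPolynomial.X 9 * MvPolynomial.X 23 * MvPolynomial.X 23) + MvPolynomial.C (-2 : ℝ) * (MvPolynomial.X 10 * MvPolynomial.X 23) + MvPolynomial.C (-4/3 : ℝ) * (MvPolynomial.X 14 * MvPolynomial.X 15) + MvPolynomial.C (-8/3 : ℝ) * (MvPolynomial.X 15 * MvPolynomial.X 18 * MvPolynomial.X 23) + MvPolynomial.C (2 : ℝ) * (MvPolynomial.X 15 * MvPolynomial.X 20) + MvPolynomial.C (-1/2 : ℝ) * (MvPolynomial.X 15 * MvPolynomial.X 24) + MvPolynomial.C (8/3 : ℝ) * (MvPolynomial.X 15 * MvPolynomial.X 15 * MvPolynomial.X 25) + MvPolynomial.C (1/2 : ℝ) * (MvPolynomial.X 16 * MvPolynomial.X 23)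

set_option maxHeartbeats 1000000 in
noncomputable def pKP1 : MvPolynomial (Fin 31) ℝ :=
  MvPolynomial.C (8/3 : ℝ) * (MvPolynomial.X 0 * MvPolynomial.X 9 * MvPolynomial.X 25) + MvPolynomial.C (8/3 : ℝ) * (MvPolynomial.X 0 * MvPolynomial.X 11 * MvPolynomial.X 23) + MvPolynomial.C (-2/3 : ℝ) * (MvPolynomial.X 0 * MvPolynomial.X 13) + MvPolynomial.C (8/3 : ℝ) * (MvPolynomial.X 0 * MvPolynomial.X 15 * MvPolynomial.X 21) + MvPolynomial.C (8/3 : ℝ) * (MvPolynomial.X 0 * MvPolynomial.X 18 * MvPolynomial.X 18) + MvPolynomial.C (1/2 : ℝ) * (MvPolynomial.X 0 * MvPolynomial.X 19) + MvPolynomial.C (4/3 : ℝ) * (MvPolynomial.X 0 * MvPolynomial.X 30) + MvPolynomial.C (-8/3 : ℝ) * (MvPolynomial.X 1 * MvPolynomial.X 9 * MvPolynomial.X 23) + MvPolynomial.C (2/3 : ℝ) * (MvPolynomial.X 1 * MvPolynomial.X 10) + MvPolynomial.C (-8/3 : ℝ) * (MvPolynomial.X 1 * MvPolynomial.X 15 *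 MvPolynomial.X 18) + MvPolynomial.C (-1/2 : ℝ) * (MvPolynomial.X 1 * MvPolynomial.X 16) + MvPolynomial.C (-4/3 : ℝ) * (MvPolynomial.X 1 * MvPolynomial.X 29) + MvPolynomial.C (-8/3 : ℝ) * (MvPolynomial.X 2 * MvPolynomial.X 6 * MvPolynomial.X 23) + MvPolynomial.C (-2/3 : ℝ) * (MvPolynomial.X 2 * MvPolynomial.X 7) + MvPolynomial.C (-20/3 : ℝ) * (MvPolynomial.X 2 * MvPolynomial.X 15 * MvPolynomial.X 15) + MvPolynomial.C (-8/3 : ℝ) * (MvPolynomial.X 2 * MvPolynomial.X 28) + MvPolynomial.C (2/3 : ℝ) * (MvPolynomial.X 2 * MvPolynomial.X 2) + MvPolynomial.C (8/3 : ℝ) * (MvPolynomial.X 6 * MvPolynomial.X 7 * MvPolynomial.X 23) + MvPolynomial.C (6 : ℝ) * (MvPolynomial.X 6 * MvPolynomial.X 15 * MvPolynomial.X 15 * MvPolynomial.X 23) + MvPolynomial.C (8/3 : ℝ) * (MvPolynomial.X 6 * MvPolynomial.X 23 * MvPolynomial.X 28) + MvPolynomial.C (16/3 : ℝ) * (MvPolynomial.X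 7 * MvPolynomial.X 15 * MvPolynomial.X 15) + MvPolynomial.C (2 : ℝ) * (MvPolynomial.X 7 * MvPolynomial.X 28) + MvPolynomial.C (28/3 : ℝ) * (MvPolynomial.X 15 * MvPolynomial.X 15 * MvPolynomial.X 28) + MvPolynomial.C (12 : ℝ) * (MvPolynomial.X 15 * MvPolynomial.X 15 * MvPolynomial.X 15 * MvPolynomial.X 15) + MvPolynomial.C (2 : ℝ) * (MvPolynomial.X 28 * MvPolynomial.X 28)

set_option maxHeartbeats 1000000 in
noncomputable def pKP2 : MvPolynomial (Fin 31) ℝ :=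
  MvPolynomial.C (-2/3 : ℝ) * (MvPolynomial.X 4 * MvPolynomial.X 6) + MvPolynomial.C (8/3 : ℝ) * (MvPolynomial.X 6 * MvPolynomial.X 9 * MvPolynomial.X 23) + MvPolynomial.C (16/3 : ℝ) * (MvPolynomial.X 6 * MvPolynomial.X 15 * MvPolynomial.X 18) + MvPolynomial.C (1/2 : ℝ) * (MvPolynomial.X 6 * MvPolynomial.X 16) + MvPolynomial.C (2 : ℝ) * (MvPolynomial.X 6 * MvPolynomial.X 29)

set_option maxHeartbeats 1000000 in
noncomputable def pKP3 : MvPolynomial (Fin 31) ℝ :=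
  MvPolynomial.C (-1/2 : ℝ) * (MvPolynomial.X 2 * MvPolynomial.X 15) + MvPolynomial.C (1/2 : ℝ) * (MvPolynomial.X 7 * MvPolynomial.X 15) + MvPolynomial.C (1/2 : ℝ) * (MvPolynomial.X 15 * MvPolynomial.X 28) + MvPolynomial.C (1 : ℝ) * (MvPolynomial.X 15 * MvPolynomial.X 15 * MvPolynomial.X 15)

noncomputable def pKP : Fin 4 → MvPolynomial (Fin 31) ℝ := ![pKP0, pKP1, pKP2, pKP3]

set_option maxHeartbeats 4000000 in
theorem keyKP (v : (Fin 4 → ℝ) → ℝ) (hv : ContDiff ℝ (⊤ : ℕ∞) v) (x : Fin 4 → ℝ) :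
    F2 v x * F1 v x = ∑ i : Fin 4, pd 4 i (DP (pKP i) bKP v) x := by
  have hb0 : pdM 4 (bKP 0) v = dv v 0 0 0 0 := by
    rw [show bKP 0 = ![0,0,0,0] from rfl, pdM4_eq]
  have hb1 : pdM 4 (bKP 1) v = dv v 0 1 0 0 := by
    rw [show bKP 1 = ![0,1,0,0] from rfl, pdM4_eq]
  have hb2 : pdM 4 (bKP 2) v = dv v 0 2 0 0 := by
    rw [show bKP 2 = ![0,2,0,0] from rfl, pdM4_eq]
  have hb3 : pdM 4 (bKP 3) v = dv v 0 2 0 1 := by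
    rw [show bKP 3 = ![0,2,0,1] from rfl, pdM4_eq]
  have hb4 : pdM 4 (bKP 4) v = dv v 0 3 0 0 := by
    rw [show bKP 4 = ![0,3,0,0] from rfl, pdM4_eq]
  have hb5 : pdM 4 (bKP 5) v = dv v 0 3 1 0 := by
    rw [show bKP 5 = ![0,3,1,0] from rfl, pdM4_eq]
  have hb6 : pdM 4 (bKP 6) v = dv v 1 0 0 0 := by
    rw [show bKP 6 = ![1,0,0,0] from rfl, pdM4_eq]
  have hb7 : pdM 4 (bKP 7) v = dv v 1 0 1 0 := by
    rw [show bKP 7 = ![1,0,1,0] from rfl, pdM4_eq]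
  have hb8 : pdM 4 (bKP 8) v = dv v 1 0 1 1 := by
    rw [show bKP 8 = ![1,0,1,1] from rfl, pdM4_eq]
  have hb9 : pdM 4 (bKP 9) v = dv v 1 1 0 0 := by
    rw [show bKP 9 = ![1,1,0,0] from rfl, pdM4_eq]
  have hb10 : pdM 4 (bKP 10) v = dv v 1 1 1 0 := by
    rw [show bKP 10 = ![1,1,1,0] from rfl, pdM4_eq]
  have hb11 : pdM 4 (bKP 11) v = dv v 1 2 0 0 := by
    rw [show bKP 11 = ![1,2,0,0] from rfl, pdM4_eq]
  have hb12 : pdM 4 (bKP 12) v = dv v 1 2 0 1 := by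
    rw [show bKP 12 = ![1,2,0,1] from rfl, pdM4_eq]
  have hb13 : pdM 4 (bKP 13) v = dv v 1 2 1 0 := by
    rw [show bKP 13 = ![1,2,1,0] from rfl, pdM4_eq]
  have hb14 : pdM 4 (bKP 14) v = dv v 1 3 0 0 := by
    rw [show bKP 14 = ![1,3,0,0] from rfl, pdM4_eq]
  have hb15 : pdM 4 (bKP 15) v = dv v 2 0 0 0 := by
    rw [show bKP 15 = ![2,0,0,0] from rfl, pdM4_eq]
  have hb16 : pdM 4 (bKP 16) v = dv v 2 0 0 1 := by
    rw [show bKP 16 = ![2,0,0,1] from rfl, pdM4_eq]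
  have hb17 : pdM 4 (bKP 17) v = dv v 2 0 1 0 := by
    rw [show bKP 17 = ![2,0,1,0] from rfl, pdM4_eq]
  have hb18 : pdM 4 (bKP 18) v = dv v 2 1 0 0 := by
    rw [show bKP 18 = ![2,1,0,0] from rfl, pdM4_eq]
  have hb19 : pdM 4 (bKP 19) v = dv v 2 1 0 1 := by
    rw [show bKP 19 = ![2,1,0,1] from rfl, pdM4_eq]
  have hb20 : pdM 4 (bKP 20) v = dv v 2 1 1 0 := by
    rw [show bKP 20 = ![2,1,1,0] from rfl, pdM4_eq]
  have hb21 : pdM 4 (bKP 21) v = dv v 2 2 0 0 := by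
    rw [show bKP 21 = ![2,2,0,0] from rfl, pdM4_eq]
  have hb22 : pdM 4 (bKP 22) v = dv v 2 3 0 0 := by
    rw [show bKP 22 = ![2,3,0,0] from rfl, pdM4_eq]
  have hb23 : pdM 4 (bKP 23) v = dv v 3 0 0 0 := by
    rw [show bKP 23 = ![3,0,0,0] from rfl, pdM4_eq]
  have hb24 : pdM 4 (bKP 24) v = dv v 3 0 0 1 := by
    rw [show bKP 24 = ![3,0,0,1] from rfl, pdM4_eq]
  have hb25 : pdM 4 (bKP 25) v = dv v 3 1 0 0 := by
    rw [show bKP 25 = ![3,1,0,0] from rfl, pdM4_eq]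
  have hb26 : pdM 4 (bKP 26) v = dv v 3 1 1 0 := by
    rw [show bKP 26 = ![3,1,1,0] from rfl, pdM4_eq]
  have hb27 : pdM 4 (bKP 27) v = dv v 3 3 0 0 := by
    rw [show bKP 27 = ![3,3,0,0] from rfl, pdM4_eq]
  have hb28 : pdM 4 (bKP 28) v = dv v 4 0 0 0 := by
    rw [show bKP 28 = ![4,0,0,0] from rfl, pdM4_eq]
  have hb29 : pdM 4 (bKP 29) v = dv v 4 1 0 0 := by
    rw [show bKP 29 = ![4,1,0,0] from rfl, pdM4_eq]
  have hb30 : pdM 4 (bKP 30) v = dv v 4 2 0 0 := by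
    rw [show bKP 30 = ![4,2,0,0] from rfl, pdM4_eq]
  have hdf0 : Differentiable ℝ (dv v 0 0 0 0) := (dv_contDiff hv 0 0 0 0).differentiable (by simp)
  have hdf1 : Differentiable ℝ (dv v 0 1 0 0) := (dv_contDiff hv 0 1 0 0).differentiable (by simp)
  have hdf2 : Differentiable ℝ (dv v 0 2 0 0) := (dv_contDiff hv 0 2 0 0).differentiable (by simp)
  have hdf3 : Differentiable ℝ (dv v 0 2 0 1) := (dv_contDiff hv 0 2 0 1).differentiable (by simp)
  have hdf4 : Differentiable ℝ (dv v 0 3 0 0) := (dv_contDiff hv 0 3 0 0).differentiable (by simp)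
  have hdf5 : Differentiable ℝ (dv v 0 3 1 0) := (dv_contDiff hv 0 3 1 0).differentiable (by simp)
  have hdf6 : Differentiable ℝ (dv v 1 0 0 0) := (dv_contDiff hv 1 0 0 0).differentiable (by simp)
  have hdf7 : Differentiable ℝ (dv v 1 0 1 0) := (dv_contDiff hv 1 0 1 0).differentiable (by simp)
  have hdf8 : Differentiable ℝ (dv v 1 0 1 1) := (dv_contDiff hv 1 0 1 1).differentiable (by simp)
  have hdf9 : Differentiable ℝ (dv v 1 1 0 0) := (dv_contDiff hv 1 1 0 0).differentiable (by simp)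
  have hdf10 : Differentiable ℝ (dv v 1 1 1 0) := (dv_contDiff hv 1 1 1 0).differentiable (by simp)
  have hdf11 : Differentiable ℝ (dv v 1 2 0 0) := (dv_contDiff hv 1 2 0 0).differentiable (by simp)
  have hdf12 : Differentiable ℝ (dv v 1 2 0 1) := (dv_contDiff hv 1 2 0 1).differentiable (by simp)
  have hdf13 : Differentiable ℝ (dv v 1 2 1 0) := (dv_contDiff hv 1 2 1 0).differentiable (by simp)
  have hdf14 : Differentiable ℝ (dv v 1 3 0 0) := (dv_contDiff hv 1 3 0 0).differentiable (by simp)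
  have hdf15 : Differentiable ℝ (dv v 2 0 0 0) := (dv_contDiff hv 2 0 0 0).differentiable (by simp)
  have hdf16 : Differentiable ℝ (dv v 2 0 0 1) := (dv_contDiff hv 2 0 0 1).differentiable (by simp)
  have hdf17 : Differentiable ℝ (dv v 2 0 1 0) := (dv_contDiff hv 2 0 1 0).differentiable (by simp)
  have hdf18 : Differentiable ℝ (dv v 2 1 0 0) := (dv_contDiff hv 2 1 0 0).differentiable (by simp)
  have hdf19 : Differentiable ℝ (dv v 2 1 0 1) := (dv_contDiff hv 2 1 0 1).differentiable (by simp)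
  have hdf20 : Differentiable ℝ (dv v 2 1 1 0) := (dv_contDiff hv 2 1 1 0).differentiable (by simp)
  have hdf21 : Differentiable ℝ (dv v 2 2 0 0) := (dv_contDiff hv 2 2 0 0).differentiable (by simp)
  have hdf22 : Differentiable ℝ (dv v 2 3 0 0) := (dv_contDiff hv 2 3 0 0).differentiable (by simp)
  have hdf23 : Differentiable ℝ (dv v 3 0 0 0) := (dv_contDiff hv 3 0 0 0).differentiable (by simp)
  have hdf24 : Differentiable ℝ (dv v 3 0 0 1) := (dv_contDiff hv 3 0 0 1).differentiable (by simp)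
  have hdf25 : Differentiable ℝ (dv v 3 1 0 0) := (dv_contDiff hv 3 1 0 0).differentiable (by simp)
  have hdf26 : Differentiable ℝ (dv v 3 1 1 0) := (dv_contDiff hv 3 1 1 0).differentiable (by simp)
  have hdf27 : Differentiable ℝ (dv v 3 3 0 0) := (dv_contDiff hv 3 3 0 0).differentiable (by simp)
  have hdf28 : Differentiable ℝ (dv v 4 0 0 0) := (dv_contDiff hv 4 0 0 0).differentiable (by simp)
  have hdf29 : Differentiable ℝ (dv v 4 1 0 0) := (dv_contDiff hv 4 1 0 0).differentiable (by simp)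
  have hdf30 : Differentiable ℝ (dv v 4 2 0 0) := (dv_contDiff hv 4 2 0 0).differentiable (by simp)
  have e0 : DP (pKP 0) bKP v = fun y => (2/3 : ℝ) * (dv v 0 0 0 0 y * dv v 0 3 1 0 y) + (-8/3 : ℝ) * (dv v 0 0 0 0 y * dv v 1 1 0 0 y * dv v 2 2 0 0 y) + (-16/3 : ℝ) * (dv v 0 0 0 0 y * dv v 1 2 0 0 y * dv v 2 1 0 0 y) + (-1/2 : ℝ) * (dv v 0 0 0 0 y * dv v 1 2 0 1 y) + (-8/3 : ℝ) * (dv v 0 0 0 0 y * dv v 1 3 0 0 y * dv v 2 0 0 0 y) + (-4/3 : ℝ) * (dv v 0 0 0 0 y * dv v 3 3 0 0 y) + (8/3 : ℝ) * (dv v 0 2 0 0 y * dv v 1 0 0 0 y * dv v 2 1 0 0 y) + (-8/3 : ℝ) * (dv v 0 2 0 0 y * dv v 1 1 0 0 y * dv v 2 0 0 0 y) + (1/2 : ℝ) * (dv v 0 2 0 1 y * dv v 1 0 0 0 y) + (8/3 : ℝ) * (dv v 0 3 0 0 y * dv v 1 0 0 0 y * dv v 2 0 0 0 y) + (4/3 :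 ℝ) * (dv v 0 3 0 0 y * dv v 3 0 0 0 y) + (-8/3 : ℝ) * (dv v 1 0 0 0 y * dv v 1 0 1 0 y * dv v 2 1 0 0 y) + (-1/2 : ℝ) * (dv v 1 0 0 0 y * dv v 1 0 1 1 y) + (8/3 : ℝ) * (dv v 1 0 0 0 y * dv v 1 1 0 0 y * dv v 1 2 0 0 y) + (-8/3 : ℝ) * (dv v 1 0 0 0 y * dv v 1 1 0 0 y * dv v 2 0 1 0 y) + (-16/3 : ℝ) * (dv v 1 0 0 0 y * dv v 1 1 1 0 y * dv v 2 0 0 0 y) + (-6 : ℝ) * (dv v 1 0 0 0 y * dv v 2 0 0 0 y * dv v 2 0 0 0 y * dv v 2 1 0 0 y) + (4/3 : ℝ) * (dv v 1 0 0 0 y * dv v 2 3 0 0 y) + (-8/3 : ℝ) * (dv v 1 0 0 0 y * dv v 3 0 0 0 y * dv v 3 1 0 0 y) + (-2 : ℝ) * (dv v 1 0 0 0 y * dv v 3 1 1 0 y) + (8/3 : ℝ) * (dv v 1 0 1 0 y * dv v 1 1 0 0 y * dv v 2 0 0 0 y) + (6 : ℝ) * (dv v 1 1 0 0 y * dv v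 2 0 0 0 y * dv v 2 0 0 0 y * dv v 2 0 0 0 y) + (8/3 : ℝ) * (dv v 1 1 0 0 y * dv v 3 0 0 0 y * dv v 3 0 0 0 y) + (-2 : ℝ) * (dv v 1 1 1 0 y * dv v 3 0 0 0 y) + (-4/3 : ℝ) * (dv v 1 3 0 0 y * dv v 2 0 0 0 y) + (-8/3 : ℝ) * (dv v 2 0 0 0 y * dv v 2 1 0 0 y * dv v 3 0 0 0 y) + (2 : ℝ) * (dv v 2 0 0 0 y * dv v 2 1 1 0 y) + (-1/2 : ℝ) * (dv v 2 0 0 0 y * dv v 3 0 0 1 y) + (8/3 : ℝ) * (dv v 2 0 0 0 y * dv v 2 0 0 0 y * dv v 3 1 0 0 y) + (1/2 : ℝ) * (dv v 2 0 0 1 y * dv v 3 0 0 0 y) := by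
    funext y
    simp only [DP, pKP, pKP0, pKP1, pKP2, pKP3, Matrix.cons_val_zero, Matrix.cons_val_one, Matrix.head_cons,
      Matrix.cons_val_two, Matrix.tail_cons, Matrix.cons_val_three,
      map_add, map_mul, MvPolynomial.eval_C, MvPolynomial.eval_X, hb0, hb1, hb2, hb3, hb4, hb5, hb6, hb7, hb8, hb9, hb10, hb11, hb12, hb13, hb14, hb15, hb16, hb17, hb18, hb19, hb20, hb21, hb22, hb23, hb24, hb25, hb26, hb27, hb28, hb29, hb30]
  have e1 : DP (pKP 1) bKP v = fun y => (8/3 : ℝ) * (dv v 0 0 0 0 y * dv v 1 1 0 0 y * dv v 3 1 0 0 y) + (8/3 : ℝ) * (dv v 0 0 0 0 y * dv v 1 2 0 0 y * dv v 3 0 0 0 y) + (-2/3 : ℝ) * (dv v 0 0 0 0 y * dv v 1 2 1 0 y) + (8/3 : ℝ) * (dv v 0 0 0 0 y * dv v 2 0 0 0 y * dv v 2 2 0 0 y) + (8/3 : ℝ) * (dv v 0 0 0 0 y * dv v 2 1 0 0 y * dv v 2 1 0 0 y) + (1/2 : ℝ) * (dv v 0 0 0 0 y * dv v 2 1 0 1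 y) + (4/3 : ℝ) * (dv v 0 0 0 0 y * dv v 4 2 0 0 y) + (-8/3 : ℝ) * (dv v 0 1 0 0 y * dv v 1 1 0 0 y * dv v 3 0 0 0 y) + (2/3 : ℝ) * (dv v 0 1 0 0 y * dv v 1 1 1 0 y) + (-8/3 : ℝ) * (dv v 0 1 0 0 y * dv v 2 0 0 0 y * dv v 2 1 0 0 y) + (-1/2 : ℝ) * (dv v 0 1 0 0 y * dv v 2 0 0 1 y) + (-4/3 : ℝ) * (dv v 0 1 0 0 y * dv v 4 1 0 0 y) + (-8/3 : ℝ) * (dv v 0 2 0 0 y * dv v 1 0 0 0 y * dv v 3 0 0 0 y) + (-2/3 : ℝ) * (dv v 0 2 0 0 y * dv v 1 0 1 0 y) + (-20/3 : ℝ) * (dv v 0 2 0 0 y * dv v 2 0 0 0 y * dv v 2 0 0 0 y) + (-8/3 : ℝ) * (dv v 0 2 0 0 y * dv v 4 0 0 0 y) + (2/3 : ℝ) * (dv v 0 2 0 0 y * dv v 0 2 0 0 y) + (8/3 : ℝ) * (dv v 1 0 0 0 y * dv v 1 0 1 0 y * dv v 3 0 0 0 y) + (6 : ℝ) * (dv v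 1 0 0 0 y * dv v 2 0 0 0 y * dv v 2 0 0 0 y * dv v 3 0 0 0 y) + (8/3 : ℝ) * (dv v 1 0 0 0 y * dv v 3 0 0 0 y * dv v 4 0 0 0 y) + (16/3 : ℝ) * (dv v 1 0 1 0 y * dv v 2 0 0 0 y * dv v 2 0 0 0 y) + (2 : ℝ) * (dv v 1 0 1 0 y * dv v 4 0 0 0 y) + (28/3 : ℝ) * (dv v 2 0 0 0 y * dv v 2 0 0 0 y * dv v 4 0 0 0 y) + (12 : ℝ) * (dv v 2 0 0 0 y * dv v 2 0 0 0 y * dv v 2 0 0 0 y * dv v 2 0 0 0 y) + (2 : ℝ) * (dv v 4 0 0 0 y * dv v 4 0 0 0 y) := by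
    funext y
    simp only [DP, pKP, pKP0, pKP1, pKP2, pKP3, Matrix.cons_val_zero, Matrix.cons_val_one, Matrix.head_cons,
      Matrix.cons_val_two, Matrix.tail_cons, Matrix.cons_val_three,
      map_add, map_mul, MvPolynomial.eval_C, MvPolynomial.eval_X, hb0, hb1, hb2, hb3, hb4, hb5, hb6, hb7, hb8, hb9, hb10, hb11, hb12, hb13, hb14, hb15, hb16, hb17, hb18, hb19, hb20, hb21, hb22, hb23, hb24, hb25, hb26, hb27, hb28, hb29, hb30]
  have e2 : DP (pKP 2) bKP v = fun y => (-2/3 : ℝ) * (dv v 0 3 0 0 y * dv v 1 0 0 0 y) + (8/3 : ℝ) * (dv v 1 0 0 0 y * dv v 1 1 0 0 y * dv v 3 0 0 0 y) + (16/3 : ℝ) * (dv v 1 0 0 0 y * dv v 2 0 0 0 y * dv v 2 1 0 0 y) + (1/2 : ℝ) * (dv v 1 0 0 0 y * dv v 2 0 0 1 y) + (2 : ℝ) * (dv v 1 0 0 0 y * dv v 4 1 0 0 y) := by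
    funext y
    simp only [DP, pKP, pKP0, pKP1, pKP2, pKP3, Matrix.cons_val_zero, Matrix.cons_val_one, Matrix.head_cons,
      Matrix.cons_val_two, Matrix.tail_cons, Matrix.cons_val_three,
      map_add, map_mul, MvPolynomial.eval_C, MvPolynomial.eval_X, hb0, hb1, hb2, hb3, hb4, hb5, hb6, hb7, hb8, hb9, hb10, hb11, hb12, hb13, hb14, hb15, hb16, hb17, hb18, hb19, hb20, hb21, hb22, hb23, hb24, hb25, hb26, hb27, hb28, hb29, hb30]
  have e3 : DP (pKP 3) bKP v = fun y => (-1/2 : ℝ) * (dv v 0 2 0 0 y * dv v 2 0 0 0 y) + (1/2 : ℝ) * (dv v 1 0 1 0 y * dv v 2 0 0 0 y) + (1/2 : ℝ) * (dv v 2 0 0 0 y * dv v 4 0 0 0 y) + (1 : ℝ) * (dv v 2 0 0 0 y * dv v 2 0 0 0 y * dv v 2 0 0 0 y) := by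
    funext y
    simp only [DP, pKP, pKP0, pKP1, pKP2, pKP3, Matrix.cons_val_zero, Matrix.cons_val_one, Matrix.head_cons,
      Matrix.cons_val_two, Matrix.tail_cons, Matrix.cons_val_three,
      map_add, map_mul, MvPolynomial.eval_C, MvPolynomial.eval_X, hb0, hb1, hb2, hb3, hb4, hb5, hb6, hb7, hb8, hb9, hb10, hb11, hb12, hb13, hb14, hb15, hb16, hb17, hb18, hb19, hb20, hb21, hb22, hb23, hb24, hb25, hb26, hb27, hb28, hb29, hb30]
  have hF1 : F1 v x = dv v 1 0 1 0 x - dv v 0 2 0 0 x + 3 * (dv v 2 0 0 0 x) ^ 2 + dv v 4 0 0 0 x := by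
    simp [F1, dv]
  have hF2 : F2 v x = dv v 2 0 0 1 x + 4 * dv v 4 1 0 0 x - (4/3) * dv v 0 3 0 0 x
      + 8 * dv v 3 0 0 0 x * dv v 1 1 0 0 x + 16 * dv v 2 0 0 0 x * dv v 2 1 0 0 x := by
    simp [F2, dv]
  rw [Fin.sum_univ_four, e0, e1, e2, e3, hF1, hF2]
  simp (disch := fun_prop) only [pd_fun_add, pd_fun_mul, pd_fun_const_mul, pd_fun_const,
    zero_mul, mul_zero, add_zero, zero_add,
    pd0_dv, pd1_dv hv, pd2_dv hv, pd3_dv hv, Nat.reduceAdd]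
  ring

/-- The KP Lagrangian 3-form divergence identity: there are differential polynomials
`P₁,…,P₄` in `v` (no explicit `x`-dependence) with `F₂·F₁ = ∂₁P₁ + ∂₂P₂ + ∂₃P₃ + ∂₄P₄`
pointwise for every smooth `v`; in particular the divergence vanishes whenever `v`
satisfies either KP equation `F₁ = 0` or `F₂ = 0`. -/
theorem stmt_18 :
    ∃ (k : ℕ) (β : Fin k → Fin 4 → ℕ) (p : Fin 4 → MvPolynomial (Fin k) ℝ),
      (∀ v : (Fin 4 → ℝ) → ℝ, ContDiff ℝ (⊤ : ℕ∞) v → ∀ x,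
        F2 v x * F1 v x = ∑ i : Fin 4, pd 4 i (DP (p i) β v) x)
      ∧ (∀ v : (Fin 4 → ℝ) → ℝ, ContDiff ℝ (⊤ : ℕ∞) v →
          ((∀ x, F1 v x = 0) ∨ (∀ x, F2 v x = 0)) →
          ∀ x, ∑ i : Fin 4, pd 4 i (DP (p i) β v) x = 0) := by
  refine ⟨31, bKP, pKP, fun v hv x => keyKP v hv x, ?_⟩
  intro v hv hor x
  rcases hor with h | h
  · rw [← keyKP v hv x, h x, mul_zero]
  · rw [← keyKP v hv x, h x, zero_mul]
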